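/- Let G be a simple graph of order n ≥ 6 containing no cycle of length 5 as a subgraph. If the maximum degree of G is at most n - 2, then q(G) < q(S_{n,2}). -/

import Mathlib

open SimpleGraph

/-- The signless Laplacian matrix `Q(G) = D(G) + A(G)` of a finite simple graph. -/
noncomputable def signlessLaplacian {V : Type*} [Fintype V] [DecidableEq V]
    (G : SimpleGraph V) : Matrix V V ℝ :=
  letI := Classical.decRel G.Adj
  Matrix.diagonal (fun v => (G.degree v : ℝ)) + G.adjMatrix ℝ

/-- The `Q`-index of a graph: the largest eigenvalue of its signless Laplacian. -/
noncomputable def qIndex {V : Type*} [Fintype V] [DecidableEq V]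
    (G : SimpleGraph V) : ℝ :=
  sSup (spectrum ℝ (signlessLaplacian G))

/-- `H` is contained in `G` as a (not necessarily induced) subgraph. -/
def ContainsCopy {α β : Type*} (H : SimpleGraph α) (G : SimpleGraph β) : Prop :=
  ∃ f : α ↪ β, ∀ ⦃a b⦄, H.Adj a b → G.Adj (f a) (f b)

/-- The friendship-type graph `F_n`: vertex `0` is dominating; the remaining
vertices are paired `(1,2), (3,4), …`; for even `n` the last vertex is a pendant. -/
def friendshipGraph (n : ℕ) : SimpleGraph (Fin n) where
  Adj i j := i ≠ j ∧ (i.val = 0 ∨ j.val = 0 ∨ (i.val + 1) / 2 = (j.val + 1) / 2)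
  symm := by
    constructor
    intro i j ⟨h1, h2⟩
    exact ⟨h1.symm, by tauto⟩
  loopless := by
    constructor
    intro i ⟨h1, _⟩
    exact h1 rfl

/-- The graph `S_{n,k} = K_k ∨ \overline{K}_{n-k}`: the first `k` vertices form a
complete graph joined to an independent set on the remaining `n - k` vertices. -/
def sGraph (n k : ℕ) : SimpleGraph (Fin n) where
  Adj i j := i ≠ j ∧ (i.val < k ∨ j.val < k)
  symm := by
    constructor
    intro i j ⟨h1, h2⟩
    exact ⟨h1.symm, h2.symm⟩
  loopless := by
    constructor
    intro i ⟨h1, _⟩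
    exact h1 rfl

/-- The number of edges of `G` with one endpoint in `X` and the other in `Y`
(counted as ordered pairs in `X × Y`; for disjoint `X`, `Y` this is `e(X,Y)`). -/
noncomputable def edgesBetween {V : Type*} [Fintype V] [DecidableEq V]
    (G : SimpleGraph V) (X Y : Finset V) : ℕ :=
  letI := Classical.decRel G.Adj
  ((X ×ˢ Y).filter fun p => G.Adj p.1 p.2).card

/-- The number of edges of `G` with both endpoints in `X`. -/
noncomputable def edgesWithin {V : Type*} [Fintype V] [DecidableEq V]
    (G : SimpleGraph V) (X : Finset V) : ℕ :=
  edgesBetween G X X / 2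

/-!
Let `x` be an eigenvector of `Q(G)` for `μ`. At a vertex `u` maximising `|x u| / d u`, the `u`-th
row of `Q x = μ x` gives `μ ≤ d u + m u`, where `m u` is the average degree of the neighbours of `u`.

If `G` has no `C₅`, then `G[N(u)]` has no path on four vertices, and a vertex outside `N[u]`
(there is one, as `Δ ≤ n - 2`) sees at most one vertex of `N(u)` lying in a component of
`G[N(u)]` with three or more vertices. Counting the edges at `N(u)` this gives
`∑_{w ~ u} d w + d u ^ 2 ≤ d u (n + 1) + 1`, hence `d u + m u ≤ n + 1 + 1 / d u ≤ n + 5/4` when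
`d u ≥ 4`, while `d u + m u ≤ 3 + Δ ≤ n + 1` when `d u ≤ 3`. On the other side, `S_{n,2}` has the
eigenvalue `(n + 2 + √((n + 2)² - 16)) / 2 > n + 5/4`.
-/

open Finset
open scoped Matrix

theorem Matrix.mem_spectrum_iff_exists_mulVec_eq_smul {n K : Type*} [Fintype n] [DecidableEq n]
    [Field K] (A : Matrix n n K) (μ : K) :
    μ ∈ spectrum K A ↔ ∃ v ≠ 0, A *ᵥ v = μ • v := by
  rw [← Matrix.spectrum_toLin', ← Module.End.hasEigenvalue_iff_mem_spectrum]
  constructor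
  · intro h
    obtain ⟨v, hv, hv0⟩ := h.exists_hasEigenvector
    exact ⟨v, hv0, Module.End.mem_eigenspace_iff.mp hv⟩
  · rintro ⟨v, hv0, hv⟩
    exact Module.End.hasEigenvalue_of_hasEigenvector (x := v)
      ⟨Module.End.mem_eigenspace_iff.mpr hv, hv0⟩

section Spectrum

variable {V : Type*} [Fintype V] [DecidableEq V] (G : SimpleGraph V)

theorem le_qIndex_of_mem_spectrum {μ : ℝ} (hμ : μ ∈ spectrum ℝ (signlessLaplacian G)) :
    μ ≤ qIndex G :=
  le_csSup (Matrix.finite_spectrum _).bddAbove hμ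

variable [DecidableRel G.Adj]

theorem signlessLaplacian_eq :
    signlessLaplacian G = Matrix.diagonal (fun v => (G.degree v : ℝ)) + G.adjMatrix ℝ := by
  rw [signlessLaplacian, Subsingleton.elim (Classical.decRel G.Adj) ‹_›]

theorem signlessLaplacian_mulVec_apply (x : V → ℝ) (v : V) :
    (signlessLaplacian G *ᵥ x) v = G.degree v * x v + ∑ w ∈ G.neighborFinset v, x w := by
  simp [signlessLaplacian_eq, Matrix.add_mulVec, Matrix.mulVec_diagonal]

end Spectrum

namespace SimpleGraph

section AverageNeighborDegree

variable {V : Type*} [Fintype V] (G : SimpleGraph V) [DecidableRel G.Adj]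

noncomputable def averageNeighborDegree (u : V) : ℝ :=
  (∑ w ∈ G.neighborFinset u, (G.degree w : ℝ)) / G.degree u

theorem averageNeighborDegree_le {k : ℕ} (h : ∀ v, G.degree v ≤ k) (u : V) :
    G.averageNeighborDegree u ≤ k := by
  rcases (G.degree u).eq_zero_or_pos with hu | hu
  · simp [averageNeighborDegree, hu]
  rw [averageNeighborDegree, div_le_iff₀ (by exact_mod_cast hu), mul_comm,
    ← card_neighborFinset_eq_degree]
  exact_mod_cast sum_le_card_nsmul _ _ _ fun w _ => h w

theorem le_degree_add_averageNeighborDegree_of_abs_mul_le {μ : ℝ} {u : V}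
    (h : |μ - G.degree u| * max (G.degree u : ℝ) 1
      ≤ ∑ w ∈ G.neighborFinset u, (G.degree w : ℝ)) :
    μ ≤ G.degree u + G.averageNeighborDegree u := by
  rw [averageNeighborDegree]
  rcases (G.degree u).eq_zero_or_pos with hdu | hdu
  · have hN : G.neighborFinset u = ∅ := by
      rwa [← card_eq_zero, card_neighborFinset_eq_degree]
    simp only [hN, hdu, sum_empty, Nat.cast_zero, sub_zero, zero_le_one, max_eq_right,
      mul_one] at h ⊢
    linarith [le_abs_self μ]
  · have hdu' : (1 : ℝ) ≤ G.degree u := by exact_mod_cast hdu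
    rw [max_eq_left hdu', ← le_div_iff₀ (by linarith)] at h
    linarith [le_abs_self (μ - G.degree u)]

theorem exists_le_degree_add_averageNeighborDegree_of_abs_mul_le [DecidableEq V] {μ : ℝ}
    (hμ : μ ∈ spectrum ℝ (signlessLaplacian G)) :
    ∃ u, μ ≤ G.degree u + G.averageNeighborDegree u := by
  obtain ⟨x, hx0, hx⟩ := (Matrix.mem_spectrum_iff_exists_mulVec_eq_smul _ _).mp hμ
  obtain ⟨v₀, hv₀⟩ := Function.ne_iff.mp hx0
  -- `max _ 1` avoids dividing by zero at isolated vertices.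
  set s : V → ℝ := fun v => max (G.degree v : ℝ) 1
  have hs : ∀ v, 0 < s v := fun v => lt_max_of_lt_right one_pos
  obtain ⟨u, -, hu⟩ := exists_max_image univ (fun v => |x v| / s v) ⟨v₀, mem_univ _⟩
  set t := |x u| / s u
  have ht : 0 < t := (div_pos (abs_pos.mpr hv₀) (hs v₀)).trans_le (hu v₀ (mem_univ _))
  have hrow : (μ - G.degree u) * x u = ∑ w ∈ G.neighborFinset u, x w := by
    have := congrFun hx u
    rw [signlessLaplacian_mulVec_apply, Pi.smul_apply, smul_eq_mul] at this
    linarith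
  refine ⟨u, G.le_degree_add_averageNeighborDegree_of_abs_mul_le (le_of_mul_le_mul_right ?_ ht)⟩
  calc |μ - G.degree u| * s u * t = |∑ w ∈ G.neighborFinset u, x w| := by
        rw [← hrow, abs_mul, mul_assoc, mul_div_cancel₀ _ (hs u).ne']
    _ ≤ ∑ w ∈ G.neighborFinset u, |x w| := abs_sum_le_sum_abs _ _
    _ ≤ ∑ w ∈ G.neighborFinset u, (G.degree w : ℝ) * t := by
        refine sum_le_sum fun w hw => ?_
        have hdw : (1 : ℝ) ≤ G.degree w := by
          exact_mod_cast (G.degree_pos_iff_exists_adj w).mpr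
            ⟨u, ((G.mem_neighborFinset u w).mp hw).symm⟩
        have := hu w (mem_univ _)
        rw [div_le_iff₀ (hs w), show s w = G.degree w from max_eq_left hdw] at this
        linarith
    _ = (∑ w ∈ G.neighborFinset u, (G.degree w : ℝ)) * t := by rw [sum_mul]

end AverageNeighborDegree

section DegreeIn

variable {V : Type*} {G : SimpleGraph V} [DecidableRel G.Adj]

def degreeIn (G : SimpleGraph V) [DecidableRel G.Adj] (S : Finset V) (a : V) : ℕ :=
  #{b ∈ S | G.Adj a b}

theorem degreeIn_le_card (S : Finset V) (a : V) : G.degreeIn S a ≤ #S :=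
  card_filter_le _ _

theorem degreeIn_mono {S T : Finset V} (h : S ⊆ T) (a : V) : G.degreeIn S a ≤ G.degreeIn T a :=
  card_le_card (filter_subset_filter _ h)

theorem sum_degreeIn_comm (S T : Finset V) :
    ∑ a ∈ S, G.degreeIn T a = ∑ b ∈ T, G.degreeIn S b := by
  have := sum_card_bipartiteAbove_eq_sum_card_bipartiteBelow (s := S) (t := T) (r := G.Adj)
  simpa only [degreeIn, bipartiteAbove, bipartiteBelow, G.adj_comm _ (_ : V)] using this

theorem degree_eq_degreeIn_univ [Fintype V] (a : V) : G.degree a = G.degreeIn univ a := by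
  rw [← card_neighborFinset_eq_degree, neighborFinset_eq_filter]
  rfl

variable [DecidableEq V]

theorem degreeIn_union {S T : Finset V} (h : Disjoint S T) (a : V) :
    G.degreeIn (S ∪ T) a = G.degreeIn S a + G.degreeIn T a := by
  rw [degreeIn, filter_union, card_union_of_disjoint (disjoint_filter_filter h)]
  rfl

variable [Fintype V]

theorem degree_eq_of_adj {u w : V} (huw : G.Adj u w) :
    G.degree w = 1 + G.degreeIn (G.neighborFinset u) w
      + G.degreeIn (insert u (G.neighborFinset u))ᶜ w := by
  have hu : u ∉ G.neighborFinset u := by simp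
  rw [degree_eq_degreeIn_univ, ← union_compl (insert u (G.neighborFinset u)),
    degreeIn_union disjoint_compl_right, insert_eq,
    degreeIn_union (disjoint_singleton_left.mpr hu)]
  simp [degreeIn, filter_singleton, huw.symm]

theorem sum_degree_neighborFinset (u : V) :
    ∑ w ∈ G.neighborFinset u, G.degree w
      = G.degree u + ∑ a ∈ G.neighborFinset u, G.degreeIn (G.neighborFinset u) a
        + ∑ b ∈ (insert u (G.neighborFinset u))ᶜ, G.degreeIn (G.neighborFinset u) b := by
  rw [sum_congr rfl fun w hw => degree_eq_of_adj ((G.mem_neighborFinset u w).mp hw),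
    sum_add_distrib, sum_add_distrib, sum_degreeIn_comm (G.neighborFinset u) (insert u _)ᶜ,
    sum_const, smul_eq_mul, mul_one, card_neighborFinset_eq_degree]

end DegreeIn

section CycleFiveFree

variable {V : Type*} {G : SimpleGraph V}

theorem containsCopy_cycleGraph_five {v₀ v₁ v₂ v₃ v₄ : V}
    (h₀₁ : G.Adj v₀ v₁) (h₁₂ : G.Adj v₁ v₂) (h₂₃ : G.Adj v₂ v₃) (h₃₄ : G.Adj v₃ v₄)
    (h₄₀ : G.Adj v₄ v₀) (h₀₂ : v₀ ≠ v₂) (h₀₃ : v₀ ≠ v₃) (h₁₃ : v₁ ≠ v₃) (h₁₄ : v₁ ≠ v₄)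
    (h₂₄ : v₂ ≠ v₄) : ContainsCopy (cycleGraph 5) G := by
  have hinj : Function.Injective ![v₀, v₁, v₂, v₃, v₄] := by
    have := h₀₁.ne; have := h₁₂.ne; have := h₂₃.ne; have := h₃₄.ne; have := h₄₀.ne
    intro a b hab
    fin_cases a <;> fin_cases b <;> simp_all
  refine ⟨⟨_, hinj⟩, fun a b hab => ?_⟩
  fin_cases a <;> fin_cases b <;> simp only [cycleGraph_adj] at hab <;>
    first
      | exact absurd hab (by decide)
      | simp [h₀₁, h₁₂, h₂₃, h₃₄, h₄₀, h₀₁.symm, h₁₂.symm, h₂₃.symm, h₃₄.symm, h₄₀.symm]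

theorem eq_of_adj_of_adj_of_adj_of_not_adj (hC5 : ¬ ContainsCopy (cycleGraph 5) G)
    {u w a b x : V} (hw : ¬ G.Adj u w) (hwu : w ≠ u) (ha : G.Adj u a) (hb : G.Adj u b)
    (hab : a ≠ b) (hwa : G.Adj w a) (hwb : G.Adj w b) (hx : G.Adj u x) (hax : G.Adj a x) :
    x = b := by
  by_contra hxb
  exact hC5 (containsCopy_cycleGraph_five hx hax.symm hwa.symm hwb hb.symm ha.ne hwu.symm
    (fun h => hw (h ▸ hx)) hxb hab)

variable [DecidableRel G.Adj]

/-- The vertices of `S` whose component in `G[S]` has at least three vertices. -/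
def bigComponentVerts (G : SimpleGraph V) [DecidableRel G.Adj] (S : Finset V) : Finset V :=
  {a ∈ S | 2 ≤ G.degreeIn S a ∨ ∃ b ∈ S, G.Adj a b ∧ 2 ≤ G.degreeIn S b}

theorem bigComponentVerts_subset (S : Finset V) : G.bigComponentVerts S ⊆ S :=
  filter_subset _ _

variable [Fintype V] {u : V}

theorem degreeIn_le_one_of_adj_of_three_le [DecidableEq V]
    (hC5 : ¬ ContainsCopy (cycleGraph 5) G) {a b : V}
    (ha : G.Adj u a) (hb : G.Adj u b) (hab : G.Adj a b)
    (h3 : 3 ≤ G.degreeIn (G.neighborFinset u) a) : G.degreeIn (G.neighborFinset u) b ≤ 1 := by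
  by_contra! h2
  obtain ⟨x, hx, hxa⟩ := exists_mem_ne h2 a
  have hy : 0 < #({c ∈ G.neighborFinset u | G.Adj a c} \ {b, x}) := by
    have := le_card_sdiff {b, x} {c ∈ G.neighborFinset u | G.Adj a c}
    have := card_le_two (a := b) (b := x)
    rw [degreeIn] at h3
    omega
  obtain ⟨y, hy⟩ := card_pos.mp hy
  simp only [mem_sdiff, mem_filter, mem_neighborFinset, mem_insert, mem_singleton,
    not_or] at hx hy
  exact hC5 (containsCopy_cycleGraph_five hx.1 hx.2.symm hab.symm hy.1.2 hy.1.1.symm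
    hb.ne ha.ne hxa (Ne.symm hy.2.2) (Ne.symm hy.2.1))

theorem degreeIn_bigComponentVerts_le_one (hC5 : ¬ ContainsCopy (cycleGraph 5) G) {w : V}
    (hw : ¬ G.Adj u w) (hwu : w ≠ u) :
    G.degreeIn (G.bigComponentVerts (G.neighborFinset u)) w ≤ 1 := by
  by_contra! h
  obtain ⟨a, ha, b, hb, hab⟩ := one_lt_card.mp h
  simp only [bigComponentVerts, mem_filter, mem_neighborFinset] at ha hb
  have only_b : ∀ x, G.Adj u x → G.Adj a x → x = b := fun x =>
    eq_of_adj_of_adj_of_adj_of_not_adj hC5 hw hwu ha.1.1 hb.1.1 hab ha.2 hb.2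
  have only_a : ∀ x, G.Adj u x → G.Adj b x → x = a := fun x =>
    eq_of_adj_of_adj_of_adj_of_not_adj hC5 hw hwu hb.1.1 ha.1.1 (Ne.symm hab) hb.2 ha.2
  have hle : ∀ {c d}, (∀ x, G.Adj u x → G.Adj c x → x = d) →
      G.degreeIn (G.neighborFinset u) c ≤ 1 := fun hcd =>
    card_le_one.mpr fun x hx y hy => by
      simp only [mem_filter, mem_neighborFinset] at hx hy
      rw [hcd x hx.1 hx.2, hcd y hy.1 hy.2]
  rcases ha.1.2 with h2 | ⟨c, hc, hac, h2⟩
  · exact absurd (hle only_b) (by omega)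
  · rw [only_b c hc hac] at h2
    exact absurd (hle only_a) (by omega)

variable [DecidableEq V]

theorem sum_degreeIn_bigComponentVerts_le (hC5 : ¬ ContainsCopy (cycleGraph 5) G) :
    ∑ a ∈ G.bigComponentVerts (G.neighborFinset u), G.degreeIn (G.neighborFinset u) a
      ≤ 2 * #(G.bigComponentVerts (G.neighborFinset u)) := by
  set N := G.neighborFinset u
  set M := G.bigComponentVerts N
  set hubs := {a ∈ M | 3 ≤ G.degreeIn N a}
  set leaves := {a ∈ M | G.degreeIn N a ≤ 1}
  -- Inside `N`, a hub sees only leaves, and a leaf sees at most one hub.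
  have hubs_le : ∑ a ∈ hubs, G.degreeIn N a ≤ #leaves := by
    calc ∑ a ∈ hubs, G.degreeIn N a ≤ ∑ a ∈ hubs, G.degreeIn leaves a := by
          refine sum_le_sum fun a ha => card_le_card fun b hb => ?_
          simp only [hubs, M, bigComponentVerts, mem_filter] at ha hb
          have hb1 := degreeIn_le_one_of_adj_of_three_le hC5
            ((G.mem_neighborFinset u a).mp ha.1.1) ((G.mem_neighborFinset u b).mp hb.1) hb.2 ha.2
          exact mem_filter.mpr ⟨mem_filter.mpr ⟨mem_filter.mpr ⟨hb.1,
            Or.inr ⟨a, ha.1.1, hb.2.symm, by omega⟩⟩, hb1⟩, hb.2⟩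
      _ = ∑ b ∈ leaves, G.degreeIn hubs b := sum_degreeIn_comm _ _
      _ ≤ ∑ _b ∈ leaves, 1 := sum_le_sum fun b hb =>
          (degreeIn_mono ((filter_subset _ _).trans (bigComponentVerts_subset N)) b).trans
            (mem_filter.mp hb).2
      _ = #leaves := by rw [sum_const, smul_eq_mul, mul_one]
  have hpt : ∀ a ∈ M, G.degreeIn N a + (if G.degreeIn N a ≤ 1 then 1 else 0)
      ≤ 2 + (if 3 ≤ G.degreeIn N a then G.degreeIn N a else 0) := by
    intro a _
    split_ifs <;> omega
  have := sum_le_sum hpt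
  rw [sum_add_distrib, sum_add_distrib, ← card_filter, ← sum_filter, sum_const, smul_eq_mul]
    at this
  simp only [hubs, leaves] at hubs_le
  omega

theorem sum_degreeIn_neighborFinset_le (hC5 : ¬ ContainsCopy (cycleGraph 5) G) :
    ∑ a ∈ G.neighborFinset u, G.degreeIn (G.neighborFinset u) a
      ≤ #(G.neighborFinset u \ G.bigComponentVerts (G.neighborFinset u))
        + 2 * #(G.bigComponentVerts (G.neighborFinset u)) := by
  set N := G.neighborFinset u
  set M := G.bigComponentVerts N
  have hsmall : ∀ a ∈ N \ M, G.degreeIn N a ≤ 1 := fun a ha => by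
    by_contra! h
    exact (mem_sdiff.mp ha).2 (mem_filter.mpr ⟨(mem_sdiff.mp ha).1, Or.inl h⟩)
  have hsumSmall : ∑ a ∈ N \ M, G.degreeIn N a ≤ #(N \ M) := by
    simpa using sum_le_card_nsmul _ _ _ hsmall
  have hsumBig : ∑ a ∈ M, G.degreeIn N a ≤ 2 * #M := sum_degreeIn_bigComponentVerts_le hC5
  rw [← sum_sdiff (show M ⊆ N from bigComponentVerts_subset N)]
  omega

theorem sum_degree_neighborFinset_add_sq_le (hC5 : ¬ ContainsCopy (cycleGraph 5) G)
    (hu : G.degree u + 1 < Fintype.card V) :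
    ∑ w ∈ G.neighborFinset u, G.degree w + G.degree u ^ 2
      ≤ G.degree u * (Fintype.card V + 1) + 1 := by
  set N := G.neighborFinset u
  set M := G.bigComponentVerts N
  set W := (insert u N)ᶜ
  have hN : N = (N \ M) ∪ M := (sdiff_union_of_subset (bigComponentVerts_subset N)).symm
  have hdisj : Disjoint (N \ M) M := sdiff_disjoint
  have hd : G.degree u = #(N \ M) + #M := by
    rw [← card_neighborFinset_eq_degree, ← card_union_of_disjoint hdisj, ← hN]
  have hV : Fintype.card V = G.degree u + #W + 1 := by
    rw [card_compl, card_insert_of_notMem (by simp [N]), card_neighborFinset_eq_degree]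
    omega
  have hsumN : ∑ a ∈ N, G.degreeIn N a ≤ #(N \ M) + 2 * #M :=
    sum_degreeIn_neighborFinset_le hC5
  have hsumW : ∑ b ∈ W, G.degreeIn N b ≤ #W * #(N \ M) + #W * min 1 #M := by
    have hsplit : ∀ b, G.degreeIn N b = G.degreeIn (N \ M) b + G.degreeIn M b := fun b => by
      rw [← degreeIn_union hdisj, ← hN]
    rw [sum_congr rfl fun b _ => hsplit b, sum_add_distrib]
    gcongr
    · exact sum_le_card_nsmul _ _ _ fun b _ => degreeIn_le_card _ _
    · refine sum_le_card_nsmul _ _ _ fun b hb => le_min ?_ (degreeIn_le_card _ _)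
      simp only [W, mem_compl, mem_insert, not_or, N, mem_neighborFinset] at hb
      exact degreeIn_bigComponentVerts_le_one hC5 hb.2 hb.1
  have hW : 0 < #W := by omega
  have key : #M + #W * min 1 #M ≤ #M * #W + 1 := by
    rcases (#M).eq_zero_or_pos with h | h
    · simp [h]
    · rw [min_eq_left h]
      nlinarith
  rw [sum_degree_neighborFinset, hV]
  nlinarith

theorem degree_add_averageNeighborDegree_le (hC5 : ¬ ContainsCopy (cycleGraph 5) G)
    (hu : G.degree u + 1 < Fintype.card V) (h0 : 0 < G.degree u) :
    G.degree u + G.averageNeighborDegree u ≤ Fintype.card V + 1 + 1 / G.degree u := by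
  have hsum : (∑ w ∈ G.neighborFinset u, (G.degree w : ℝ)) + (G.degree u : ℝ) ^ 2
      ≤ G.degree u * (Fintype.card V + 1) + 1 := by
    exact_mod_cast sum_degree_neighborFinset_add_sq_le hC5 hu
  have hd : (0 : ℝ) < G.degree u := by exact_mod_cast h0
  have hdiff : (Fintype.card V + 1 + 1 / G.degree u : ℝ) - (G.degree u + G.averageNeighborDegree u)
      = (G.degree u * (Fintype.card V + 1) + 1
        - ((∑ w ∈ G.neighborFinset u, (G.degree w : ℝ)) + (G.degree u : ℝ) ^ 2)) / G.degree u := by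
    rw [averageNeighborDegree]
    field_simp
    ring
  rw [← sub_nonneg, hdiff]
  exact div_nonneg (sub_nonneg.mpr hsum) hd.le

theorem qIndex_le_of_cycleGraph_five_free (hC5 : ¬ ContainsCopy (cycleGraph 5) G)
    (hΔ : ∀ v, G.degree v + 1 < Fintype.card V) : qIndex G ≤ Fintype.card V + 5 / 4 := by
  refine Real.sSup_le (fun μ hμ => ?_) (by positivity)
  obtain ⟨u, hu⟩ := G.exists_le_degree_add_averageNeighborDegree_of_abs_mul_le hμ
  refine hu.trans ?_
  rcases le_or_gt (G.degree u) 3 with h3 | h4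
  · have havg := G.averageNeighborDegree_le (k := Fintype.card V - 2)
      (fun v => by have := hΔ v; omega) u
    have hcast : ((Fintype.card V - 2 : ℕ) : ℝ) = Fintype.card V - 2 :=
      Nat.cast_sub (by have := hΔ u; omega)
    have h3' : (G.degree u : ℝ) ≤ 3 := by exact_mod_cast h3
    linarith
  · have hbound := degree_add_averageNeighborDegree_le hC5 (hΔ u) (by omega)
    have h4' : 1 / (G.degree u : ℝ) ≤ 1 / 4 := by
      gcongr
      exact_mod_cast h4
    linarith

end CycleFiveFree

end SimpleGraph

section SGraph

instance (n k : ℕ) : DecidableRel (sGraph n k).Adj := fun i j =>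
  inferInstanceAs (Decidable (i ≠ j ∧ ((i : ℕ) < k ∨ (j : ℕ) < k)))

variable {n k : ℕ}

theorem sGraph_adj {i j : Fin n} :
    (sGraph n k).Adj i j ↔ i ≠ j ∧ ((i : ℕ) < k ∨ (j : ℕ) < k) :=
  Iff.rfl

theorem sGraph_neighborFinset_of_lt {i : Fin n} (hi : (i : ℕ) < k) :
    (sGraph n k).neighborFinset i = univ.erase i := by
  ext j
  simp only [mem_neighborFinset, sGraph_adj, mem_erase, mem_univ, and_true, hi, true_or, ne_comm]

theorem sGraph_neighborFinset_of_le {i : Fin n} (hi : k ≤ i) :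
    (sGraph n k).neighborFinset i = ({j | (j : ℕ) < k} : Finset (Fin n)) := by
  ext j
  simp only [mem_neighborFinset, sGraph_adj, mem_filter, mem_univ, true_and]
  constructor
  · rintro ⟨-, h | h⟩
    · omega
    · exact h
  · intro h
    exact ⟨fun hij => by subst hij; omega, Or.inr h⟩

theorem sGraph_degree_of_lt {i : Fin n} (hi : (i : ℕ) < k) : (sGraph n k).degree i = n - 1 := by
  rw [← card_neighborFinset_eq_degree, sGraph_neighborFinset_of_lt hi,
    card_erase_of_mem (mem_univ _), card_univ, Fintype.card_fin]

theorem sGraph_degree_of_le (hkn : k ≤ n) {i : Fin n} (hi : k ≤ i) :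
    (sGraph n k).degree i = k := by
  rw [← card_neighborFinset_eq_degree, sGraph_neighborFinset_of_le hi, Fin.card_filter_val_lt,
    min_eq_right hkn]

theorem mem_spectrum_signlessLaplacian_sGraph (hk : 0 < k) (hkn : k < n) :
    ((n + 2 * k - 2 : ℝ) + √((n + 2 * k - 2) ^ 2 - 8 * k * (k - 1))) / 2
      ∈ spectrum ℝ (signlessLaplacian (sGraph n k)) := by
  have hk' : (1 : ℝ) ≤ k := by exact_mod_cast hk
  have hkn' : (k : ℝ) + 1 ≤ n := by exact_mod_cast hkn
  set l := ((n + 2 * k - 2 : ℝ) + √((n + 2 * k - 2) ^ 2 - 8 * k * (k - 1))) / 2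
  have hl : l ^ 2 = (n + 2 * k - 2) * l - 2 * k * (k - 1) := by
    have := Real.sq_sqrt (show (0 : ℝ) ≤ (n + 2 * k - 2) ^ 2 - 8 * k * (k - 1) by nlinarith)
    simp only [l]
    linear_combination this / 4
  set v : Fin n → ℝ := fun i => if (i : ℕ) < k then l - k else k
  have hsum : ∑ j, v j = k * (l - k) + (n - k) * k := by
    rw [sum_ite, sum_const, sum_const, Fin.card_filter_val_lt, min_eq_right hkn.le,
      filter_not, card_sdiff_of_subset (filter_subset _ _), Fin.card_filter_val_lt,
      min_eq_right hkn.le, card_univ, Fintype.card_fin, nsmul_eq_mul, nsmul_eq_mul,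
      Nat.cast_sub hkn.le]
  have hclique : ∑ j ∈ ({j | (j : ℕ) < k} : Finset (Fin n)), v j = k * (l - k) := by
    rw [sum_congr rfl fun j hj => if_pos (mem_filter.mp hj).2, sum_const,
      Fin.card_filter_val_lt, min_eq_right hkn.le, nsmul_eq_mul]
  refine (Matrix.mem_spectrum_iff_exists_mulVec_eq_smul _ _).mpr ⟨v, ?_, ?_⟩
  · intro h
    have := congrFun h ⟨k, hkn⟩
    simp only [v, lt_irrefl, if_false, Pi.zero_apply] at this
    exact hk.ne' (by exact_mod_cast this)
  · ext i
    rw [signlessLaplacian_mulVec_apply, Pi.smul_apply, smul_eq_mul]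
    by_cases hi : (i : ℕ) < k
    · rw [sGraph_neighborFinset_of_lt hi, sGraph_degree_of_lt hi, sum_erase_eq_sub (mem_univ _),
        hsum, Nat.cast_sub (by omega)]
      simp only [v, hi, if_true]
      push_cast
      linear_combination -hl
    · rw [sGraph_neighborFinset_of_le (not_lt.mp hi), sGraph_degree_of_le hkn.le (not_lt.mp hi),
        hclique]
      simp only [v, hi, if_false]
      ring

theorem lt_qIndex_sGraph_two (hn : 5 ≤ n) : (n : ℝ) + 5 / 4 < qIndex (sGraph n 2) := by
  have hmem := mem_spectrum_signlessLaplacian_sGraph (n := n) (k := 2) two_pos (by omega)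
  refine lt_of_lt_of_le ?_ (le_qIndex_of_mem_spectrum _ hmem)
  have hn' : (5 : ℝ) ≤ n := by exact_mod_cast hn
  have hsqrt : (n : ℝ) + 1 / 2 < √(((n : ℝ) + 2 * 2 - 2) ^ 2 - 8 * 2 * (2 - 1)) :=
    Real.lt_sqrt_of_sq_lt (by nlinarith)
  push_cast
  linarith

end SGraph

/-- If `G` has order `n ≥ 6`, no `C₅` as a subgraph, and maximum degree at most
`n - 2`, then `q(G) < q(S_{n,2})`. -/
theorem stmt_15 (n : ℕ) (hn : 6 ≤ n) (G : SimpleGraph (Fin n)) [DecidableRel G.Adj]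
    (hC5 : ¬ ContainsCopy (cycleGraph 5) G)
    (hΔ : ∀ v : Fin n, G.degree v ≤ n - 2) :
    qIndex G < qIndex (sGraph n 2) := by
  have hΔ' : ∀ v, G.degree v + 1 < Fintype.card (Fin n) := fun v => by
    rw [Fintype.card_fin]
    have := hΔ v
    omega
  calc qIndex G ≤ n + 5 / 4 := by simpa using G.qIndex_le_of_cycleGraph_five_free hC5 hΔ'
    _ < qIndex (sGraph n 2) := lt_qIndex_sGraph_two (by omega)
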